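/- arXiv:1111.3501 — 4 statements merged into one kernel-verified Lean document; each statement's English description precedes it below -/
import Mathlib

section
/- Let ℓ ≤ C(m,2). Choose distinct complex numbers α_1,…,α_ℓ and complex numbers β_1,…,β_m such that the products β_iβ_j (i<j) are pairwise distinct and β_i^ℓ ≠ β_j^ℓ for i ≠ j. Let A = diag(D,D) with D = diag(α_1,…,α_ℓ), let B have entries β_j^{i−1}, and let J = [[0,I_ℓ],[−I_ℓ,0]]. Then the linear map from m×m skew-symmetric matrices F to ℂ^ℓ given by F ↦ (k·tr(A^{k−1} B F Bᵀ J))_{k=1,…,ℓ} is surjective. -/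
open Matrix

lemma trace_key (l m : ℕ) (d : Fin l → ℂ) (β : Fin m → ℂ) (F : Matrix (Fin m) (Fin m) ℂ) :
    Matrix.trace (Matrix.fromBlocks (Matrix.diagonal d) 0 0 (Matrix.diagonal d) *
      ((Matrix.of fun p j => β j ^ (Sum.elim (fun a : Fin l => (a : ℕ)) (fun a : Fin l => l + (a : ℕ)) p)) * F *
       (Matrix.of fun p j => β j ^ (Sum.elim (fun a : Fin l => (a : ℕ)) (fun a : Fin l => l + (a : ℕ)) p))ᵀ *
       Matrix.fromBlocks 0 1 (-1) 0)) =
    ∑ a : Fin l, d a * ∑ i : Fin m, ∑ j : Fin m,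
      F i j * ((β i * β j) ^ (a : ℕ) * (β i ^ l - β j ^ l)) := by
  simp only [Matrix.trace, Matrix.diag, Matrix.mul_apply, Fintype.sum_sum_type,
    Matrix.fromBlocks_apply₁₁, Matrix.fromBlocks_apply₁₂, Matrix.fromBlocks_apply₂₁,
    Matrix.fromBlocks_apply₂₂, Matrix.of_apply, Sum.elim_inl, Sum.elim_inr,
    Matrix.diagonal_apply, Matrix.transpose_apply, Matrix.zero_apply, Matrix.one_apply,
    Matrix.neg_apply, Finset.sum_ite_eq, Finset.sum_ite_eq', Finset.mem_univ, if_true,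
    mul_ite, ite_mul, zero_mul, mul_zero, Finset.sum_mul, Finset.mul_sum, mul_neg, neg_mul,
    Finset.sum_neg_distrib, mul_one, one_mul, zero_add, add_zero, Finset.sum_ite_irrel,
    Finset.sum_const_zero]
  simp only [neg_zero, add_zero, ← Finset.sum_neg_distrib, ← Finset.sum_add_distrib]
  refine Finset.sum_congr rfl fun a _ => ?_
  rw [Finset.sum_comm]
  refine Finset.sum_congr rfl fun i _ => Finset.sum_congr rfl fun j _ => ?_
  ring

lemma pow_blocks (l : ℕ) (α : Fin l → ℂ) (k : ℕ) :
    (Matrix.fromBlocks (Matrix.diagonal α) 0 0 (Matrix.diagonal α) : Matrix (Fin l ⊕ Fin l) _ ℂ) ^ k =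
    Matrix.fromBlocks (Matrix.diagonal fun a => α a ^ k) 0 0 (Matrix.diagonal fun a => α a ^ k) := by
  induction k with
  | zero => simp [Matrix.fromBlocks_one]
  | succ n ih =>
    rw [pow_succ, ih, Matrix.fromBlocks_multiply]
    simp [Matrix.diagonal_mul_diagonal, pow_succ]

lemma stdBasis_transpose {n : Type*} [DecidableEq n] (i j : n) (c : ℂ) :
    (Matrix.single i j c)ᵀ = Matrix.single j i c := by
  ext a b
  simp [Matrix.single, and_comm]

lemma card_pairs (m : ℕ) :
    Fintype.card {p : Fin m × Fin m // p.1 < p.2} = m.choose 2 := by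
  rw [Fintype.card_subtype, Finset.card_filter, Fintype.sum_prod_type_right]
  have h : ∀ b : Fin m, (∑ a : Fin m, if (a, b).1 < (a, b).2 then 1 else 0) = (b : ℕ) := by
    intro b
    simp only [← Finset.sum_filter]
    rw [Finset.sum_const, smul_eq_mul, mul_one]
    have : Finset.filter (fun a : Fin m => (a, b).1 < (a, b).2) Finset.univ = Finset.Iio b := by
      ext x; simp
    rw [this, Fin.card_Iio]
  rw [Finset.sum_congr rfl fun b _ => h b]
  rw [Fin.sum_univ_eq_sum_range (fun i => i) m, Finset.sum_range_id, Nat.choose_two_right]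

theorem differential_of_pole_placement_surjective
    (l m : ℕ) (hlm : l ≤ m.choose 2)
    (α : Fin l → ℂ) (β : Fin m → ℂ)
    (hα : Function.Injective α)
    (hβprod : ∀ i j k r : Fin m, i < j → k < r → β i * β j = β k * β r → i = k ∧ j = r)
    (hβpow : ∀ i j : Fin m, i ≠ j → β i ^ l ≠ β j ^ l)
    (A : Matrix (Fin l ⊕ Fin l) (Fin l ⊕ Fin l) ℂ)
    (hA : A = Matrix.fromBlocks (Matrix.diagonal α) 0 0 (Matrix.diagonal α))
    (B : Matrix (Fin l ⊕ Fin l) (Fin m) ℂ)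
    (hB : B = Matrix.of fun p j => β j ^ (Sum.elim (fun a : Fin l => (a : ℕ)) (fun a : Fin l => l + (a : ℕ)) p))
    (J : Matrix (Fin l ⊕ Fin l) (Fin l ⊕ Fin l) ℂ)
    (hJ : J = Matrix.fromBlocks 0 1 (-1) 0) :
    ∀ t : Fin l → ℂ, ∃ F : Matrix (Fin m) (Fin m) ℂ, Fᵀ = -F ∧
      ∀ k : Fin l, ((k : ℕ) + 1 : ℂ) * Matrix.trace (A ^ (k : ℕ) * (B * F * Bᵀ * J)) = t k := by
  intro t
  -- embedding into ordered pairs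
  obtain ⟨e⟩ : Nonempty (Fin l ↪ {p : Fin m × Fin m // p.1 < p.2}) := by
    apply Function.Embedding.nonempty_of_card_le
    rwa [Fintype.card_fin, card_pairs]
  set I : Fin l → Fin m := fun σ => (e σ).1.1 with hI
  set K : Fin l → Fin m := fun σ => (e σ).1.2 with hK
  have hIK : ∀ σ, I σ < K σ := fun σ => (e σ).2
  set γ : Fin l → ℂ := fun σ => β (I σ) * β (K σ) with hγ
  set δ : Fin l → ℂ := fun σ => β (I σ) ^ l - β (K σ) ^ l with hδ
  have hδne : ∀ σ, δ σ ≠ 0 := by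
    intro σ
    have := hβpow (I σ) (K σ) (ne_of_lt (hIK σ))
    simpa [hδ, sub_eq_zero] using this
  have hγinj : Function.Injective γ := by
    intro σ τ h
    have h2 := hβprod (I σ) (K σ) (I τ) (K τ) (hIK σ) (hIK τ) h
    have : e σ = e τ := Subtype.ext (Prod.ext h2.1 h2.2)
    exact e.injective this
  -- the two Vandermonde-type matrices
  set V : Matrix (Fin l) (Fin l) ℂ :=
    Matrix.of (fun k a : Fin l => ((k : ℕ) + 1 : ℂ) * α a ^ (k : ℕ)) with hV
  set W : Matrix (Fin l) (Fin l) ℂ :=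
    Matrix.of (fun a σ : Fin l => γ σ ^ (a : ℕ)) with hW
  have hVdet : V.det ≠ 0 := by
    have : V = Matrix.diagonal (fun k : Fin l => ((k : ℕ) + 1 : ℂ)) * (Matrix.vandermonde α)ᵀ := by
      ext k a
      simp [hV, Matrix.mul_apply, Matrix.diagonal_apply, Matrix.vandermonde,
        Finset.sum_ite_eq, ite_mul, zero_mul]
    rw [this, Matrix.det_mul, Matrix.det_transpose, Matrix.det_diagonal]
    apply mul_ne_zero
    · apply Finset.prod_ne_zero_iff.mpr
      intro k _
      exact Nat.cast_add_one_ne_zero (k : ℕ)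
    · exact Matrix.det_vandermonde_ne_zero_iff.mpr hα
  have hWdet : W.det ≠ 0 := by
    have : W = (Matrix.vandermonde γ)ᵀ := by
      ext a σ; simp [hW, Matrix.vandermonde]
    rw [this, Matrix.det_transpose]
    exact Matrix.det_vandermonde_ne_zero_iff.mpr hγinj
  set P : Matrix (Fin l) (Fin l) ℂ := V * W with hP
  have hPdet : IsUnit P.det := by
    rw [hP, Matrix.det_mul]
    exact (mul_ne_zero hVdet hWdet).isUnit
  set x : Fin l → ℂ := P⁻¹ *ᵥ t with hx
  have hPx : P *ᵥ x = t := by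
    rw [hx, Matrix.mulVec_mulVec, Matrix.mul_nonsing_inv _ hPdet, Matrix.one_mulVec]
  set c : Fin l → ℂ := fun σ => x σ / (2 * δ σ) with hc
  refine ⟨∑ σ : Fin l, c σ • (Matrix.single (I σ) (K σ) (1 : ℂ) -
      Matrix.single (K σ) (I σ) (1 : ℂ)), ?_, ?_⟩
  · -- skew-symmetry
    rw [Matrix.transpose_sum]
    rw [← Finset.sum_neg_distrib]
    refine Finset.sum_congr rfl fun σ _ => ?_
    rw [Matrix.transpose_smul, Matrix.transpose_sub, stdBasis_transpose,
      stdBasis_transpose, ← smul_neg, neg_sub]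
  · intro k
    rw [hA, hB, hJ, pow_blocks, trace_key]
    have hF : ∀ g : Fin m → Fin m → ℂ,
        (∑ i : Fin m, ∑ j : Fin m,
          (∑ σ : Fin l, c σ • (Matrix.single (I σ) (K σ) (1 : ℂ) -
            Matrix.single (K σ) (I σ) (1 : ℂ))) i j * g i j) =
        ∑ σ : Fin l, c σ * (g (I σ) (K σ) - g (K σ) (I σ)) := by
      intro g
      simp only [Matrix.sum_apply, Matrix.sub_apply, Matrix.smul_apply, smul_eq_mul,
        Matrix.single, Matrix.of_apply, Finset.sum_mul, ite_mul, one_mul, zero_mul,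
        sub_mul, mul_sub, Finset.sum_ite_irrel, Finset.sum_const_zero,
        Finset.sum_ite_eq, Finset.sum_ite_eq', Finset.mem_univ, if_true, mul_ite, mul_zero,
        Finset.sum_sub_distrib]
      have swap3 : ∀ (f : Fin m → Fin m → Fin l → ℂ),
          ∑ y : Fin m, ∑ x : Fin m, ∑ σ : Fin l, f y x σ =
          ∑ σ : Fin l, ∑ y : Fin m, ∑ x : Fin m, f y x σ := by
        intro f
        have h1 : ∀ y, ∑ x : Fin m, ∑ σ : Fin l, f y x σ =
            ∑ σ : Fin l, ∑ x : Fin m, f y x σ := fun y => Finset.sum_comm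
        simp_rw [h1]
        exact Finset.sum_comm
      rw [swap3]
      rw [swap3]
      refine congrArg₂ (· - ·) (Finset.sum_congr rfl fun σ _ => ?_)
        (Finset.sum_congr rfl fun σ _ => ?_) <;>
        simp [ite_and, Finset.sum_ite_irrel, Finset.sum_ite_eq, Finset.sum_ite_eq',
          Finset.sum_const_zero]
    have hstep : ∀ a : Fin l, (∑ i : Fin m, ∑ j : Fin m,
        (∑ σ : Fin l, c σ • (Matrix.single (I σ) (K σ) (1 : ℂ) -
          Matrix.single (K σ) (I σ) (1 : ℂ))) i j *
          ((β i * β j) ^ (a : ℕ) * (β i ^ l - β j ^ l))) =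
        ∑ σ : Fin l, x σ * γ σ ^ (a : ℕ) := by
      intro a
      rw [hF fun i j => (β i * β j) ^ (a : ℕ) * (β i ^ l - β j ^ l)]
      refine Finset.sum_congr rfl fun σ _ => ?_
      have hne := hδne σ
      rw [hc, hδ] at *
      field_simp
      ring
    calc ((k : ℕ) + 1 : ℂ) * ∑ a : Fin l, α a ^ (k : ℕ) * ∑ i : Fin m, ∑ j : Fin m,
          (∑ σ : Fin l, c σ • (Matrix.single (I σ) (K σ) (1 : ℂ) -
            Matrix.single (K σ) (I σ) (1 : ℂ))) i j *
            ((β i * β j) ^ (a : ℕ) * (β i ^ l - β j ^ l))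
        = ∑ a : Fin l, ∑ σ : Fin l, ((k : ℕ) + 1 : ℂ) * α a ^ (k : ℕ) * (x σ * γ σ ^ (a : ℕ)) := by
          rw [Finset.mul_sum]
          refine Finset.sum_congr rfl fun a _ => ?_
          rw [hstep a, Finset.mul_sum, Finset.mul_sum]
          refine Finset.sum_congr rfl fun σ _ => ?_
          ring
      _ = (P *ᵥ x) k := by
          rw [hP, Matrix.mulVec, Finset.sum_comm]
          refine Finset.sum_congr rfl fun σ _ => ?_
          simp only [Matrix.mul_apply, hV, hW, Matrix.of_apply, dotProduct, Finset.sum_mul]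
          exact Finset.sum_congr rfl fun a _ => by ring
      _ = t k := by rw [hPx]
end

section
/- With A = diag(D,D), D = diag(α_1,…,α_ℓ), B_{pj}=β_j^{p−1}, and J = [[0,I],[−I,0]], the trace tr(A^{k−1}·B(e_i∧e_j)Bᵀ·J) equals 2·Σ_{p=1}^{ℓ} α_p^{k−1}(β_iβ_j)^{p−1}(β_i^ℓ − β_j^ℓ). -/
open Matrix

theorem trace_formula_for_elementary_skew_feedback
    (l m : ℕ) (α : Fin l → ℂ) (β : Fin m → ℂ)
    (A : Matrix (Fin l ⊕ Fin l) (Fin l ⊕ Fin l) ℂ)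
    (hA : A = Matrix.fromBlocks (Matrix.diagonal α) 0 0 (Matrix.diagonal α))
    (B : Matrix (Fin l ⊕ Fin l) (Fin m) ℂ)
    (hB : B = Matrix.of fun p j => β j ^ (Sum.elim (fun a : Fin l => (a : ℕ)) (fun a : Fin l => l + (a : ℕ)) p))
    (J : Matrix (Fin l ⊕ Fin l) (Fin l ⊕ Fin l) ℂ)
    (hJ : J = Matrix.fromBlocks 0 1 (-1) 0)
    (i j : Fin m) (hij : i < j)
    (E : Matrix (Fin m) (Fin m) ℂ)
    (hE : E = Matrix.of fun a b =>
      if a = i ∧ b = j then (1 : ℂ) else if a = j ∧ b = i then -1 else 0)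
    (k : ℕ) :
    Matrix.trace (A ^ k * (B * E * Bᵀ) * J)
      = 2 * ∑ p : Fin l, α p ^ k * (β i * β j) ^ (p : ℕ) * (β i ^ l - β j ^ l) := by
  have hij' : i ≠ j := ne_of_lt hij
  have key : B * E * Bᵀ = Matrix.of fun p q => B p i * B q j - B p j * B q i := by
    subst hE
    ext p q
    simp only [Matrix.mul_apply, Matrix.of_apply, Matrix.transpose_apply]
    have hEeq : ∀ a b : Fin m,
        (if a = i ∧ b = j then (1:ℂ) else if a = j ∧ b = i then -1 else 0)
          = (if a = i then (1:ℂ) else 0) * (if b = j then 1 else 0)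
            + (if a = j then (-1:ℂ) else 0) * (if b = i then 1 else 0) := by
      intro a b
      by_cases h1 : a = i <;> by_cases h2 : b = j <;> by_cases h3 : a = j <;>
        by_cases h4 : b = i <;> simp_all
    simp only [hEeq, mul_add, add_mul, Finset.sum_add_distrib, mul_ite, ite_mul,
      mul_zero, zero_mul, mul_one, one_mul, mul_neg, neg_mul,
      Finset.sum_ite_eq, Finset.sum_ite_eq', Finset.mem_univ, if_true,
      Finset.sum_mul, Finset.mul_sum]
    ring_nf
    simp [Finset.sum_ite_eq, Finset.sum_ite_eq']
    ring
  rw [key]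
  subst hA hB hJ
  rw [Matrix.fromBlocks_diagonal, Matrix.diagonal_pow, mul_assoc]
  rw [Matrix.trace]
  simp only [Matrix.diag, Matrix.diagonal_mul, Fintype.sum_sum_type, Sum.elim_inl, Sum.elim_inr,
    Pi.pow_apply, Matrix.mul_apply, Matrix.of_apply,
    Matrix.fromBlocks_apply₁₁, Matrix.fromBlocks_apply₁₂, Matrix.fromBlocks_apply₂₁,
    Matrix.fromBlocks_apply₂₂, Matrix.zero_apply, Matrix.one_apply, Matrix.neg_apply,
    mul_ite, ite_mul, mul_zero, zero_mul, mul_one, one_mul, mul_neg, neg_mul, sub_mul,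
    Finset.sum_ite_eq, Finset.sum_ite_eq', Finset.mem_univ, if_true,
    Finset.sum_const_zero, add_zero, zero_add]
  rw [Finset.mul_sum, ← Finset.sum_add_distrib]
  refine Finset.sum_congr rfl fun p _ => ?_
  simp [Matrix.diagonal_apply, Finset.sum_ite_eq, Finset.sum_ite_eq', pow_add, mul_pow, mul_ite, ite_mul, Finset.sum_add_distrib, Finset.sum_neg_distrib]
  ring
end

section
/- For matrices A (n×n), B (n×m), C (m×n), F (m×m) with sI−A invertible, the identity det(sI − (A + BFC)) = det(sI − A) · det([[I_m, C(sI−A)⁻¹B],[F, I_m]]) holds. -/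
open Matrix

theorem feedback_characteristic_polynomial_identity
    (n m : ℕ) (A : Matrix (Fin n) (Fin n) ℂ) (B : Matrix (Fin n) (Fin m) ℂ)
    (C : Matrix (Fin m) (Fin n) ℂ) (F : Matrix (Fin m) (Fin m) ℂ) (s : ℂ)
    (hs : IsUnit (s • (1 : Matrix (Fin n) (Fin n) ℂ) - A)) :
    (s • (1 : Matrix (Fin n) (Fin n) ℂ) - (A + B * F * C)).det
      = (s • (1 : Matrix (Fin n) (Fin n) ℂ) - A).det
        * (Matrix.fromBlocks 1 (C * (s • (1 : Matrix (Fin n) (Fin n) ℂ) - A)⁻¹ * B) F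
            (1 : Matrix (Fin m) (Fin m) ℂ)).det := by
  set M := s • (1 : Matrix (Fin n) (Fin n) ℂ) - A with hM
  haveI : Invertible (1 : Matrix (Fin m) (Fin m) ℂ) := invertibleOne
  have h1 : (Matrix.fromBlocks 1 (C * M⁻¹ * B) F (1 : Matrix (Fin m) (Fin m) ℂ)).det
      = (1 - F * (C * M⁻¹ * B)).det := by
    rw [Matrix.det_fromBlocks₁₁]
    simp [Matrix.mul_assoc]
  have h2 : M - B * F * C = M * (1 - M⁻¹ * (B * F * C)) := by
    rw [Matrix.mul_sub, Matrix.mul_one, ← Matrix.mul_assoc,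
      Matrix.mul_nonsing_inv M (Matrix.isUnit_iff_isUnit_det M |>.mp hs), Matrix.one_mul]
  have h3 : s • (1 : Matrix (Fin n) (Fin n) ℂ) - (A + B * F * C) = M - B * F * C := by
    rw [hM, sub_add_eq_sub_sub]
  rw [h3, h2, Matrix.det_mul, h1]
  congr 1
  have e1 : (1 : Matrix (Fin n) (Fin n) ℂ) - M⁻¹ * (B * F * C)
      = 1 + (M⁻¹ * B) * (-(F * C)) := by
    rw [Matrix.mul_neg, ← Matrix.mul_assoc, ← Matrix.mul_assoc, ← sub_eq_add_neg,
      Matrix.mul_assoc, Matrix.mul_assoc, ← Matrix.mul_assoc B]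
  rw [e1, Matrix.det_one_add_mul_comm, Matrix.neg_mul, ← sub_eq_add_neg]
  congr 1
  rw [Matrix.mul_assoc, Matrix.mul_assoc]
end

section
/- If (A,B,C,D) and (−Aᵀ, Cᵀ, Bᵀ, −Dᵀ) are related by similarity X·(A,B,C,D) = (X⁻¹AX, X⁻¹B, CX, D) = (−Aᵀ, Cᵀ, Bᵀ, −Dᵀ) for some invertible X, and this similarity is unique (as for minimal realizations), then X is symmetric: Xᵀ = X. -/
open Matrix

theorem similarity_to_transposed_realization_is_symmetric
    (n m : ℕ) (A : Matrix (Fin n) (Fin n) ℂ) (B : Matrix (Fin n) (Fin m) ℂ)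
    (C : Matrix (Fin m) (Fin n) ℂ) (D : Matrix (Fin m) (Fin m) ℂ)
    (X : Matrix (Fin n) (Fin n) ℂ) (hX : IsUnit X)
    (h1 : X⁻¹ * A * X = -Aᵀ) (h2 : X⁻¹ * B = Cᵀ) (h3 : C * X = Bᵀ) (h4 : D = -Dᵀ)
    (huniq : ∀ Y : Matrix (Fin n) (Fin n) ℂ, IsUnit Y →
      Y⁻¹ * A * Y = A → Y⁻¹ * B = B → C * Y = C → Y = 1) :
    Xᵀ = X := by
  have hd : IsUnit X.det := (Matrix.isUnit_iff_isUnit_det X).mp hX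
  have hdT : IsUnit Xᵀ.det := by rwa [Matrix.det_transpose]
  have hXT : IsUnit Xᵀ := (Matrix.isUnit_iff_isUnit_det _).mpr hdT
  -- transpose of h1
  have hT1 : Xᵀ * Aᵀ * Xᵀ⁻¹ = -A := by
    have := congrArg Matrix.transpose h1
    simpa only [Matrix.transpose_mul, Matrix.transpose_neg, Matrix.transpose_transpose,
      Matrix.transpose_nonsing_inv, ← Matrix.mul_assoc] using this
  have hAT : Xᵀ⁻¹ * A * Xᵀ = -Aᵀ := by
    have h' := congrArg (fun M => Xᵀ⁻¹ * M * Xᵀ) hT1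
    simp only [Matrix.mul_neg, Matrix.neg_mul, Matrix.mul_assoc,
      Matrix.nonsing_inv_mul _ hdT, Matrix.nonsing_inv_mul_cancel_left _ _ hdT,
      Matrix.nonsing_inv_mul_cancel_right _ _ hdT, Matrix.mul_one] at h'
    rw [Matrix.mul_assoc, h', neg_neg]
  have key : X⁻¹ * A * X = Xᵀ⁻¹ * A * Xᵀ := h1.trans hAT.symm
  set Y := X * Xᵀ⁻¹ with hY
  have hYinv : Y⁻¹ = Xᵀ * X⁻¹ := by
    rw [hY, Matrix.mul_inv_rev, Matrix.nonsing_inv_nonsing_inv _ hdT]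
  have hYU : IsUnit Y := hX.mul (Matrix.isUnit_nonsing_inv_iff.mpr hXT)
  have hA : Y⁻¹ * A * Y = A := by
    rw [hYinv, hY]
    calc Xᵀ * X⁻¹ * A * (X * Xᵀ⁻¹)
        = Xᵀ * (X⁻¹ * A * X) * Xᵀ⁻¹ := by simp only [Matrix.mul_assoc]
      _ = Xᵀ * (Xᵀ⁻¹ * A * Xᵀ) * Xᵀ⁻¹ := by rw [key]
      _ = A := by
          simp only [Matrix.mul_assoc, Matrix.mul_nonsing_inv_cancel_left _ _ hdT,
            Matrix.mul_nonsing_inv _ hdT, Matrix.mul_one]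
  have hT3 : Xᵀ * Cᵀ = B := by
    have := congrArg Matrix.transpose h3
    simpa [Matrix.transpose_mul] using this
  have hB : Y⁻¹ * B = B := by
    rw [hYinv, Matrix.mul_assoc, h2, hT3]
  have h2' : Bᵀ * Xᵀ⁻¹ = C := by
    have := congrArg Matrix.transpose h2
    simpa only [Matrix.transpose_mul, Matrix.transpose_transpose,
      Matrix.transpose_nonsing_inv] using this
  have hC : C * Y = C := by
    rw [hY, ← Matrix.mul_assoc, h3, h2']
  have hY1 : Y = 1 := huniq Y hYU hA hB hC
  have h5 : X * Xᵀ⁻¹ = 1 := hY1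
  calc Xᵀ = X * Xᵀ⁻¹ * Xᵀ := by rw [h5, Matrix.one_mul]
    _ = X := by rw [Matrix.mul_assoc, Matrix.nonsing_inv_mul _ hdT, Matrix.mul_one]
end
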